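/- Let W' be a reflection subgroup of W, let i ∈ {1,2}, and let x, y ∈ Δ_i(W') with r_x ≠ r_y. Let n be the order of r_x·r_y (possibly infinite), and for 0 ≤ m < n let c_m, d_m, c'_m, d'_m be the (unique, since x and y are linearly independent) real constants with (⋯r_y r_x r_y)x = c_m·x + d_m·y (m alternating factors ending in r_y) and (⋯r_x r_y r_x)y = c'_m·x + d'_m·y (m alternating factors ending in r_x). Then c_m ≥ 0, d_m ≥ 0, c'_m ≥ 0 and d'_m ≥ 0 whenever m < n. -/

import Mathlib

open Pointwise

/-- The positive linear cone of a subset `A` of a real vector space: finite linear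
combinations of elements of `A` with all coefficients nonnegative and at least one
strictly positive. -/
def PLC {V : Type*} [AddCommGroup V] [Module ℝ V] (A : Set V) : Set V :=
  { v | ∃ c : V →₀ ℝ, (∀ a, 0 ≤ c a) ∧ ↑c.support ⊆ A ∧ c ≠ 0 ∧
          v = c.sum fun a t => t • a }

/-- `altEnd a b m` is the alternating product `⋯ a b a b` … of `m` factors,
ending with `b` (e.g. `altEnd a b 3 = b * a * b`). -/
def altEnd {G : Type*} [Monoid G] : G → G → ℕ → G
  | _, _, 0 => 1
  | a, b, m + 1 => altEnd b a m * b

/-- The class of `z` under the equivalence "being nonzero scalar multiples of each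
other" (the class `ẑ`). -/
def rayClass {V : Type*} [AddCommGroup V] [Module ℝ V] (z : V) : Set V :=
  { v | ∃ c : ℝ, c ≠ 0 ∧ v = c • z }

/-- The set `Â = {ẑ : z ∈ A}` of scalar-equivalence classes of elements of `A`. -/
def rayClasses {V : Type*} [AddCommGroup V] [Module ℝ V] (A : Set V) : Set (Set V) :=
  { C | ∃ z ∈ A, C = rayClass z }

/-- A Coxeter datum `(S, V₁, V₂, Π₁, Π₂, ⟨·,·⟩)` satisfying (D1)–(D5), together with
its associated abstract Coxeter group `W` (a group generated by involutions
`r s`, acting faithfully on `V₁` and `V₂` in the prescribed way, with the pairing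
`W`-invariant), the decomposition `Φᵢ = Φᵢ⁺ ⊎ Φᵢ⁻` of the paired root systems, the
`W`-equivariant bijection `φ : Φ₁ → Φ₂` (with inverse `phiInv`), and the reflections
`r_x ∈ T` attached to the roots `x ∈ Φ₁` (`refl₁`) resp. `y ∈ Φ₂` (`refl₂`). -/
structure CoxeterDatum (S : Type*) (V₁ : Type*) (V₂ : Type*) (W : Type*)
    [AddCommGroup V₁] [Module ℝ V₁] [AddCommGroup V₂] [Module ℝ V₂] [Group W] where
  pair : V₁ →ₗ[ℝ] V₂ →ₗ[ℝ] ℝ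
  α : S → V₁
  β : S → V₂
  α_inj : Function.Injective α
  β_inj : Function.Injective β
  D1 : ∀ s, pair (α s) (β s) = 1
  D2a : (0 : V₁) ∉ PLC (Set.range α)
  D2b : (0 : V₂) ∉ PLC (Set.range β)
  D2c : ∀ s, α s ∉ PLC (Set.range α \ {α s})
  D2d : ∀ s, β s ∉ PLC (Set.range β \ {β s})
  D3 : ∀ s t, s ≠ t → pair (α s) (β t) ≤ 0
  D4 : ∀ s t, pair (α s) (β t) = 0 → pair (α t) (β s) = 0
  D5 : ∀ s t, s ≠ t →
    (∃ m : ℕ, 2 ≤ m ∧ pair (α s) (β t) * pair (α t) (β s) = Real.cos (Real.pi / m) ^ 2) ∨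
      1 ≤ pair (α s) (β t) * pair (α t) (β s)
  /-- the Coxeter generators `R = {r s : s ∈ S}` of `W` -/
  r : S → W
  r_gen : Subgroup.closure (Set.range r) = ⊤
  r_ne_one : ∀ s, r s ≠ 1
  r_sq : ∀ s, r s * r s = 1
  /-- the faithful action of `W` on `V₁` -/
  ρ₁ : W →* Module.End ℝ V₁
  /-- the faithful action of `W` on `V₂` -/
  ρ₂ : W →* Module.End ℝ V₂
  ρ₁_inj : Function.Injective ρ₁
  ρ₂_inj : Function.Injective ρ₂
  hr₁ : ∀ s x, ρ₁ (r s) x = x - (2 * pair x (β s)) • α s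
  hr₂ : ∀ s y, ρ₂ (r s) y = y - (2 * pair (α s) y) • β s
  pair_inv : ∀ w x y, pair (ρ₁ w x) (ρ₂ w y) = pair x y
  /-- the `W`-equivariant bijection `φ : Φ₁ → Φ₂` -/
  phi : V₁ → V₂
  /-- the inverse `φ⁻¹ : Φ₂ → Φ₁` -/
  phiInv : V₂ → V₁
  /-- the reflection `r_x` corresponding to a root `x ∈ Φ₁` -/
  refl₁ : V₁ → W
  /-- the reflection `r_y` corresponding to a root `y ∈ Φ₂` -/
  refl₂ : V₂ → W
  decomp₁ : { v | ∃ w s, v = ρ₁ w (α s) } =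
      ({ v | ∃ w s, v = ρ₁ w (α s) } ∩ PLC (Set.range α)) ∪
        (-({ v | ∃ w s, v = ρ₁ w (α s) } ∩ PLC (Set.range α)))
  disj₁ : Disjoint ({ v | ∃ w s, v = ρ₁ w (α s) } ∩ PLC (Set.range α))
      (-({ v | ∃ w s, v = ρ₁ w (α s) } ∩ PLC (Set.range α)))
  decomp₂ : { v | ∃ w s, v = ρ₂ w (β s) } =
      ({ v | ∃ w s, v = ρ₂ w (β s) } ∩ PLC (Set.range β)) ∪
        (-({ v | ∃ w s, v = ρ₂ w (β s) } ∩ PLC (Set.range β)))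
  disj₂ : Disjoint ({ v | ∃ w s, v = ρ₂ w (β s) } ∩ PLC (Set.range β))
      (-({ v | ∃ w s, v = ρ₂ w (β s) } ∩ PLC (Set.range β)))
  phi_mem : ∀ x ∈ { v | ∃ w s, v = ρ₁ w (α s) }, phi x ∈ { v | ∃ w s, v = ρ₂ w (β s) }
  phiInv_mem : ∀ y ∈ { v | ∃ w s, v = ρ₂ w (β s) }, phiInv y ∈ { v | ∃ w s, v = ρ₁ w (α s) }
  phiInv_phi : ∀ x ∈ { v | ∃ w s, v = ρ₁ w (α s) }, phiInv (phi x) = x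
  phi_phiInv : ∀ y ∈ { v | ∃ w s, v = ρ₂ w (β s) }, phi (phiInv y) = y
  phi_simple : ∀ s, phi (α s) = β s
  phi_equiv : ∀ w, ∀ x ∈ { v | ∃ w s, v = ρ₁ w (α s) }, phi (ρ₁ w x) = ρ₂ w (phi x)
  refl₁_eq : ∀ w s, refl₁ (ρ₁ w (α s)) = w * r s * w⁻¹
  refl₂_eq : ∀ w s, refl₂ (ρ₂ w (β s)) = w * r s * w⁻¹
  refl₁_act : ∀ x ∈ { v | ∃ w s, v = ρ₁ w (α s) }, ∀ v,
      ρ₁ (refl₁ x) v = v - (2 * pair v (phi x)) • x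
  refl₂_act : ∀ y ∈ { v | ∃ w s, v = ρ₂ w (β s) }, ∀ v,
      ρ₂ (refl₂ y) v = v - (2 * pair (phiInv y) v) • y

namespace CoxeterDatum

variable {S V₁ V₂ W : Type*} [AddCommGroup V₁] [Module ℝ V₁]
  [AddCommGroup V₂] [Module ℝ V₂] [Group W]

variable (D : CoxeterDatum S V₁ V₂ W)

/-- The root system `Φ₁ = W Π₁`. -/
def Phi₁ : Set V₁ := { v | ∃ w s, v = D.ρ₁ w (D.α s) }

/-- The root system `Φ₂ = W Π₂`. -/
def Phi₂ : Set V₂ := { v | ∃ w s, v = D.ρ₂ w (D.β s) }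

/-- The positive roots `Φ₁⁺ = Φ₁ ∩ PLC Π₁`. -/
def PhiPos₁ : Set V₁ := D.Phi₁ ∩ PLC (Set.range D.α)

/-- The positive roots `Φ₂⁺ = Φ₂ ∩ PLC Π₂`. -/
def PhiPos₂ : Set V₂ := D.Phi₂ ∩ PLC (Set.range D.β)

/-- The negative roots `Φ₁⁻ = -Φ₁⁺`. -/
def PhiNeg₁ : Set V₁ := -D.PhiPos₁

/-- The negative roots `Φ₂⁻ = -Φ₂⁺`. -/
def PhiNeg₂ : Set V₂ := -D.PhiPos₂

/-- The set `T = ⋃_{w ∈ W} w R w⁻¹` of reflections of `W`. -/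
def T : Set W := { t | ∃ w s, t = w * D.r s * w⁻¹ }

/-- The length function `ℓ` of `W` with respect to the Coxeter generators `R`. -/
noncomputable def len (w : W) : ℕ :=
  sInf { n | ∃ l : List S, l.length = n ∧ (l.map D.r).prod = w }

/-- `N̄ w = {t ∈ T : ℓ(w t) < ℓ(w)}`. -/
noncomputable def Nbar (w : W) : Set W :=
  { t | t ∈ D.T ∧ D.len (w * t) < D.len w }

/-- `N₁ w = {ẑ : z ∈ Φ₁⁺, w z ∈ Φ₁⁻}`. -/
def N₁ (w : W) : Set (Set V₁) :=
  { C | ∃ z, z ∈ D.PhiPos₁ ∧ D.ρ₁ w z ∈ D.PhiNeg₁ ∧ C = rayClass z }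

/-- `N₂ w = {ẑ : z ∈ Φ₂⁺, w z ∈ Φ₂⁻}`. -/
def N₂ (w : W) : Set (Set V₂) :=
  { C | ∃ z, z ∈ D.PhiPos₂ ∧ D.ρ₂ w z ∈ D.PhiNeg₂ ∧ C = rayClass z }

/-- A subgroup `W'` of `W` is a reflection subgroup when `W' = ⟨W' ∩ T⟩`. -/
def IsReflectionSubgroup (W' : Subgroup W) : Prop :=
  W' = Subgroup.closure ((W' : Set W) ∩ D.T)

/-- `Φ₁(W') = {x ∈ Φ₁ : r_x ∈ W'}`. -/
def PhiSub₁ (W' : Subgroup W) : Set V₁ :=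
  { x | x ∈ D.Phi₁ ∧ D.refl₁ x ∈ W' }

/-- `Φ₂(W') = {y ∈ Φ₂ : r_y ∈ W'}`. -/
def PhiSub₂ (W' : Subgroup W) : Set V₂ :=
  { y | y ∈ D.Phi₂ ∧ D.refl₂ y ∈ W' }

/-- The canonical generators `S(W') = {t ∈ T : N̄(t) ∩ W' = {t}}`. -/
noncomputable def SW (W' : Subgroup W) : Set W :=
  { t | t ∈ D.T ∧ D.Nbar t ∩ (W' : Set W) = {t} }

/-- `Δ₁(W') = {x ∈ Φ₁⁺ : r_x ∈ S(W')}`. -/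
noncomputable def Delta₁ (W' : Subgroup W) : Set V₁ :=
  { x | x ∈ D.PhiPos₁ ∧ D.refl₁ x ∈ D.SW W' }

/-- `Δ₂(W') = {y ∈ Φ₂⁺ : r_y ∈ S(W')}`. -/
noncomputable def Delta₂ (W' : Subgroup W) : Set V₂ :=
  { y | y ∈ D.PhiPos₂ ∧ D.refl₂ y ∈ D.SW W' }

/-- The length function `ℓ_{W'}` of a reflection subgroup `W'` with respect to its
canonical generators `S(W')`. -/
noncomputable def lenIn (W' : Subgroup W) (w : W) : ℕ :=
  sInf { n | ∃ l : List W, l.length = n ∧ (∀ t ∈ l, t ∈ D.SW W') ∧ l.prod = w }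

end CoxeterDatum

/-!
Both halves are the same statement, for the datum and for its dual `CoxeterDatum.symm`.
The engine is the exchange condition: if `w` sends a positive root `z` to a negative one,
then `ℓ(w r_z) < ℓ(w)`. Hence a canonical generator `r_x` of `W'` keeps every positive root
`z` with `r_z ∈ W'` positive unless `r_z = r_x`. This gives, for distinct canonical
generators `r_x, r_y`, that `x, y` are linearly independent and `⟨x, φ y⟩ ≤ 0`; that a
positive root `z = c x + d y` with `r_z ∈ W'` has `c, d ≥ 0`, since otherwise `r_x z` or
`r_y z` would be negative; and that the alternating orbit `(⋯ r_y r_x r_y) x` stays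
positive for fewer than `n` factors.
-/

section PLC

variable {V : Type*} [AddCommGroup V] [Module ℝ V] {A B : Set V}

lemma PLC_mono (h : A ⊆ B) : PLC A ⊆ PLC B := fun _ ⟨c, hc0, hcA, hc, hv⟩ =>
  ⟨c, hc0, hcA.trans h, hc, hv⟩

lemma add_mem_PLC {p q : V} (hp : p ∈ PLC A) (hq : q ∈ PLC A) : p + q ∈ PLC A := by
  classical
  obtain ⟨c, hc0, hcA, hc, rfl⟩ := hp
  obtain ⟨c', hc'0, hc'A, -, rfl⟩ := hq
  refine ⟨c + c', fun a => add_nonneg (hc0 a) (hc'0 a), ?_, ?_, ?_⟩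
  · refine (Finset.coe_subset.2 Finsupp.support_add).trans ?_
    rw [Finset.coe_union]
    exact Set.union_subset hcA hc'A
  · obtain ⟨a, ha⟩ := Finsupp.ne_iff.1 hc
    refine Finsupp.ne_iff.2 ⟨a, ?_⟩
    have := (hc0 a).lt_of_ne' ha
    simp only [Finsupp.add_apply, Finsupp.coe_zero, Pi.zero_apply]
    linarith [hc'0 a]
  · exact (Finsupp.sum_add_index' (fun a => zero_smul ℝ a)
      fun a t₁ t₂ => add_smul t₁ t₂ a).symm

lemma smul_mem_PLC {p : V} {c : ℝ} (hc : 0 < c) (hp : p ∈ PLC A) : c • p ∈ PLC A := by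
  obtain ⟨f, hf0, hfA, hf, rfl⟩ := hp
  refine ⟨c • f, fun a => mul_nonneg hc.le (hf0 a),
    (Finset.coe_subset.2 Finsupp.support_smul).trans hfA, smul_ne_zero hc.ne' hf, ?_⟩
  rw [Finsupp.sum_smul_index' (fun a => zero_smul ℝ a), Finsupp.smul_sum]
  simp only [smul_smul, smul_eq_mul]

lemma smul_mem_PLC_of_mem {a : V} (ha : a ∈ A) {c : ℝ} (hc : 0 < c) : c • a ∈ PLC A := by
  classical
  refine ⟨Finsupp.single a c, fun b => ?_, ?_, by simpa using hc.ne', ?_⟩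
  · rw [Finsupp.single_apply]
    split_ifs
    exacts [hc.le, le_rfl]
  · exact (Finset.coe_subset.2 Finsupp.support_single_subset).trans (by simpa using ha)
  · rw [Finsupp.sum_single_index (zero_smul ℝ a)]

lemma smul_add_smul_mem_PLC {p q : V} {c d : ℝ} (hp : p ∈ PLC A) (hq : q ∈ PLC A)
    (hc : 0 ≤ c) (hd : 0 ≤ d) (hcd : 0 < c ∨ 0 < d) : c • p + d • q ∈ PLC A := by
  rcases hc.eq_or_lt with rfl | hc
  · simpa using smul_mem_PLC (hcd.resolve_left (lt_irrefl 0)) hq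
  rcases hd.eq_or_lt with rfl | hd
  · simpa using smul_mem_PLC hc hp
  exact add_mem_PLC (smul_mem_PLC hc hp) (smul_mem_PLC hd hq)

lemma eq_smul_or_sub_smul_mem_PLC_diff {v : V} (hv : v ∈ PLC A) (a : V) :
    (∃ k : ℝ, 0 < k ∧ v = k • a) ∨ ∃ k : ℝ, v - k • a ∈ PLC (A \ {a}) := by
  classical
  obtain ⟨c, hc0, hcA, hc, rfl⟩ := hv
  have hsplit := Finsupp.add_sum_erase' c a (fun b t => t • b) (fun b => zero_smul ℝ b)
  by_cases he : c.erase a = 0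
  · refine .inl ⟨c a, (hc0 a).lt_of_ne' fun hca => hc ?_, ?_⟩
    · rw [← Finsupp.single_add_erase a c, he, hca, Finsupp.single_zero, add_zero]
    · rw [← hsplit, he, Finsupp.sum_zero_index, add_zero]
  · refine .inr ⟨c a, c.erase a, fun b => ?_, ?_, he, by rw [← hsplit, add_sub_cancel_left]⟩
    · rw [Finsupp.erase_apply]
      split_ifs
      exacts [le_rfl, hc0 b]
    · rw [Finsupp.support_erase, Finset.coe_erase]
      exact Set.sdiff_subset_sdiff_left hcA

lemma smul_notMem_PLC_diff {a : V} (hA : (0 : V) ∉ PLC A) (haA : a ∈ A)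
    (ha : a ∉ PLC (A \ {a})) (c : ℝ) : c • a ∉ PLC (A \ {a}) := by
  intro hc
  rcases lt_trichotomy c 0 with hneg | rfl | hpos
  · refine hA ?_
    have h := add_mem_PLC (PLC_mono Set.sdiff_subset hc)
      (smul_mem_PLC_of_mem haA (neg_pos.2 hneg))
    rwa [← add_smul, add_neg_cancel, zero_smul] at h
  · exact hA (PLC_mono Set.sdiff_subset (by simpa using hc))
  · exact ha (by simpa [smul_smul, hpos.ne'] using smul_mem_PLC (inv_pos.2 hpos) hc)

lemma eq_smul_of_add_eq_smul {a z w : V} {c : ℝ} (hA : (0 : V) ∉ PLC A) (haA : a ∈ A)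
    (ha : a ∉ PLC (A \ {a})) (hz : z ∈ PLC A) (hw : w ∈ PLC A) (h : z + w = c • a) :
    ∃ k : ℝ, 0 < k ∧ z = k • a := by
  refine (eq_smul_or_sub_smul_mem_PLC_diff hz a).resolve_right ?_
  rintro ⟨k, hk⟩
  rcases eq_smul_or_sub_smul_mem_PLC_diff hw a with ⟨k', -, hw'⟩ | ⟨k', hw'⟩
  · refine smul_notMem_PLC_diff hA haA ha (c - k - k') ?_
    convert hk using 1
    rw [sub_smul, sub_smul, ← h, hw']
    abel
  · refine smul_notMem_PLC_diff hA haA ha (c - k - k') ?_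
    convert add_mem_PLC hk hw' using 1
    rw [sub_smul, sub_smul, ← h]
    abel

end PLC

section AltEnd

variable {G : Type*} [Group G]

lemma exists_altEnd_succ_eq_mul (a b : G) (m : ℕ) :
    ∃ s, (s = a ∨ s = b) ∧ altEnd a b (m + 1) = s * altEnd a b m := by
  induction m generalizing a b with
  | zero => exact ⟨b, .inr rfl, by simp [altEnd]⟩
  | succ m ih =>
    obtain ⟨s, hs, h⟩ := ih b a
    exact ⟨s, hs.symm, by rw [altEnd, h, mul_assoc]; rfl⟩

lemma altEnd_mem {H : Subgroup G} {a b : G} (ha : a ∈ H) (hb : b ∈ H) (m : ℕ) :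
    altEnd a b m ∈ H := by
  induction m generalizing a b with
  | zero => exact H.one_mem
  | succ m ih => exact H.mul_mem (ih hb ha) hb

lemma altEnd_inv_mul_altEnd {a b : G} (ha : a * a = 1) (hb : b * b = 1) (m : ℕ) :
    (altEnd b a m)⁻¹ * altEnd a b m = (a * b) ^ m := by
  induction m generalizing a b with
  | zero => simp [altEnd]
  | succ m ih =>
    calc (altEnd b a (m + 1))⁻¹ * altEnd a b (m + 1)
        = a⁻¹ * ((altEnd a b m)⁻¹ * altEnd b a m) * b := by simp only [altEnd]; group
      _ = (a * b) ^ (m + 1) := by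
        rw [ih hb ha, inv_eq_of_mul_eq_one_right ha, ← mul_pow_mul, pow_succ, mul_assoc]

end AltEnd

namespace CoxeterDatum

variable {S V₁ V₂ W : Type*} [AddCommGroup V₁] [Module ℝ V₁]
  [AddCommGroup V₂] [Module ℝ V₂] [Group W] (D : CoxeterDatum S V₁ V₂ W)
  {W' : Subgroup W} {x y z : V₁}

lemma exists_word (w : W) : ∃ l : List S, (l.map D.r).prod = w := by
  have hw : w ∈ Subgroup.closure (Set.range D.r) := D.r_gen ▸ Subgroup.mem_top w
  induction hw using Subgroup.closure_induction'' with
  | mem _ hs =>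
    obtain ⟨s, rfl⟩ := hs
    exact ⟨[s], by simp⟩
  | inv_mem _ hs =>
    obtain ⟨s, rfl⟩ := hs
    exact ⟨[s], by simp [inv_eq_of_mul_eq_one_right (D.r_sq s)]⟩
  | one => exact ⟨[], rfl⟩
  | mul _ _ _ _ hx hy =>
    obtain ⟨l, rfl⟩ := hx
    obtain ⟨l', rfl⟩ := hy
    exact ⟨l ++ l', by simp⟩

lemma len_le {w : W} {l : List S} (hl : (l.map D.r).prod = w) : D.len w ≤ l.length :=
  Nat.sInf_le ⟨l, rfl, hl⟩

lemma exists_reduced_word (w : W) :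
    ∃ l : List S, l.length = D.len w ∧ (l.map D.r).prod = w := by
  obtain ⟨l, hl⟩ := D.exists_word w
  exact Nat.sInf_mem (s := { n | ∃ l : List S, l.length = n ∧ (l.map D.r).prod = w })
    ⟨l.length, l, rfl, hl⟩

lemma len_r_mul_le (s : S) (w : W) : D.len (D.r s * w) ≤ D.len w + 1 := by
  obtain ⟨l, hl, rfl⟩ := D.exists_reduced_word w
  simpa [hl] using D.len_le (l := s :: l) rfl

lemma α_mem_Phi₁ (s : S) : D.α s ∈ D.Phi₁ := ⟨1, s, by simp⟩

lemma ρ₁_mem_Phi₁ (hz : z ∈ D.Phi₁) (w : W) : D.ρ₁ w z ∈ D.Phi₁ := by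
  obtain ⟨v, s, rfl⟩ := hz
  exact ⟨w * v, s, by simp⟩

lemma mem_PhiPos₁_or_mem_PhiNeg₁ (hz : z ∈ D.Phi₁) : z ∈ D.PhiPos₁ ∨ z ∈ D.PhiNeg₁ := by
  have h : z ∈ { v | ∃ w s, v = D.ρ₁ w (D.α s) } := hz
  rwa [D.decomp₁] at h

lemma notMem_PhiNeg₁_of_mem_PhiPos₁ (hz : z ∈ D.PhiPos₁) : z ∉ D.PhiNeg₁ :=
  Set.disjoint_left.mp D.disj₁ hz

lemma pair_phi_self (hz : z ∈ D.Phi₁) : D.pair z (D.phi z) = 1 := by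
  obtain ⟨w, s, rfl⟩ := hz
  rw [D.phi_equiv w _ (D.α_mem_Phi₁ s), D.phi_simple, D.pair_inv, D.D1]

lemma ρ₁_refl₁_self (hz : z ∈ D.Phi₁) : D.ρ₁ (D.refl₁ z) z = -z := by
  rw [D.refl₁_act z hz, D.pair_phi_self hz]
  module

lemma ne_zero_of_mem_PhiPos₁ (hz : z ∈ D.PhiPos₁) : z ≠ 0 :=
  fun h => D.D2a (h ▸ hz.2)

lemma neg_mem_Phi₁ (hz : z ∈ D.Phi₁) : -z ∈ D.Phi₁ :=
  D.ρ₁_refl₁_self hz ▸ D.ρ₁_mem_Phi₁ hz _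

lemma mem_PhiNeg₁_of_eq_smul_add_smul {x y : V₁} {c d : ℝ} (hz : z ∈ D.Phi₁)
    (hx : x ∈ D.PhiPos₁) (hy : y ∈ D.PhiPos₁) (h : z = c • x + d • y) (hc : c ≤ 0)
    (hd : d < 0) : z ∈ D.PhiNeg₁ := by
  refine Set.mem_neg.2 ⟨D.neg_mem_Phi₁ hz, ?_⟩
  convert smul_add_smul_mem_PLC hx.2 hy.2 (neg_nonneg.2 hc) (neg_pos.2 hd).le
    (.inr (neg_pos.2 hd)) using 1
  rw [h]
  module

lemma refl₁_mem_T (hz : z ∈ D.Phi₁) : D.refl₁ z ∈ D.T := by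
  obtain ⟨w, s, rfl⟩ := hz
  exact ⟨w, s, D.refl₁_eq w s⟩

lemma refl₁_ρ₁ (hz : z ∈ D.Phi₁) (w : W) : D.refl₁ (D.ρ₁ w z) = w * D.refl₁ z * w⁻¹ := by
  obtain ⟨v, s, rfl⟩ := hz
  rw [← Module.End.mul_apply, ← map_mul, D.refl₁_eq, D.refl₁_eq]
  group

lemma refl₁_mul_self (hz : z ∈ D.Phi₁) : D.refl₁ z * D.refl₁ z = 1 := by
  obtain ⟨w, s, rfl⟩ := hz
  rw [D.refl₁_eq]
  calc w * D.r s * w⁻¹ * (w * D.r s * w⁻¹) = w * (D.r s * D.r s) * w⁻¹ := by group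
    _ = 1 := by rw [D.r_sq, mul_one, mul_inv_cancel]

lemma refl₁_α (s : S) : D.refl₁ (D.α s) = D.r s := by
  simpa using D.refl₁_eq 1 s

lemma ρ₂_refl₁ (hz : z ∈ D.Phi₁) (v : V₂) :
    D.ρ₂ (D.refl₁ z) v = v - (2 * D.pair z v) • D.phi z := by
  obtain ⟨w, s, rfl⟩ := hz
  have hφ := D.phi_equiv w _ (D.α_mem_Phi₁ s)
  rw [D.phi_simple] at hφ
  have hmem : D.ρ₂ w (D.β s) ∈ D.Phi₂ := ⟨w, s, rfl⟩
  rw [D.refl₁_eq, ← D.refl₂_eq, D.refl₂_act _ hmem, ← hφ,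
    D.phiInv_phi _ (D.ρ₁_mem_Phi₁ (D.α_mem_Phi₁ s) w)]

lemma phi_neg (hz : z ∈ D.Phi₁) : D.phi (-z) = -D.phi z := by
  rw [← D.ρ₁_refl₁_self hz, D.phi_equiv _ z hz, D.ρ₂_refl₁ hz, D.pair_phi_self hz]
  module

lemma phi_eq_inv_smul {z' : V₁} (hz : z ∈ D.Phi₁) (hz' : z' ∈ D.Phi₁) {c : ℝ}
    (h : z' = c • z) : D.phi z' = c⁻¹ • D.phi z := by
  have hpair : D.pair z (D.phi z') = c⁻¹ := by
    have := D.pair_phi_self hz'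
    nth_rewrite 1 [h] at this
    rw [map_smul, LinearMap.smul_apply, smul_eq_mul] at this
    exact eq_inv_of_mul_eq_one_right this
  have hneg : D.ρ₁ (D.refl₁ z) z' = -z' := by
    rw [h, map_smul, D.ρ₁_refl₁_self hz, smul_neg]
  have key := congrArg D.phi hneg
  rw [D.phi_equiv _ z' hz', D.ρ₂_refl₁ hz, D.phi_neg hz', hpair] at key
  linear_combination (norm := module) (2⁻¹ : ℝ) • key

lemma refl₁_eq_of_eq_smul {z' : V₁} (hz : z ∈ D.Phi₁) (hz' : z' ∈ D.Phi₁) {c : ℝ}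
    (hc : c ≠ 0) (h : z' = c • z) : D.refl₁ z' = D.refl₁ z := by
  refine D.ρ₁_inj (LinearMap.ext fun v => ?_)
  rw [D.refl₁_act z hz, D.refl₁_act z' hz', D.phi_eq_inv_smul hz hz' h, h, map_smul,
    smul_eq_mul, smul_smul]
  congr 2
  field_simp

lemma eq_smul_of_refl₁_eq (hz : z ∈ D.Phi₁) (hx : x ∈ D.Phi₁)
    (h : D.refl₁ z = D.refl₁ x) : z = D.pair z (D.phi x) • x := by
  have key := D.refl₁_act x hx z
  rw [← h, D.ρ₁_refl₁_self hz] at key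
  linear_combination (norm := module) -(2⁻¹ : ℝ) • key

lemma refl₁_eq_r_of_ρ₁_r_mem_PhiNeg₁ {s : S} (hz : z ∈ D.PhiPos₁)
    (hneg : D.ρ₁ (D.r s) z ∈ D.PhiNeg₁) : D.refl₁ z = D.r s := by
  have hsum : z + -D.ρ₁ (D.r s) z = (2 * D.pair z (D.β s)) • D.α s := by
    rw [D.hr₁]
    abel
  obtain ⟨k, hk, hzk⟩ := eq_smul_of_add_eq_smul D.D2a ⟨s, rfl⟩ (D.D2c s) hz.2 hneg.2 hsum
  rw [D.refl₁_eq_of_eq_smul (D.α_mem_Phi₁ s) hz.1 hk.ne' hzk, D.refl₁_α]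

lemma len_mul_refl₁_lt_length (l : List S) (hz : z ∈ D.PhiPos₁)
    (hneg : D.ρ₁ (l.map D.r).prod z ∈ D.PhiNeg₁) :
    D.len ((l.map D.r).prod * D.refl₁ z) < l.length := by
  induction l with
  | nil => exact absurd (by simpa using hneg) (D.notMem_PhiNeg₁_of_mem_PhiPos₁ hz)
  | cons s l ih =>
    set w := (l.map D.r).prod
    simp only [List.map_cons, List.prod_cons, List.length_cons] at hneg ⊢
    rcases D.mem_PhiPos₁_or_mem_PhiNeg₁ (D.ρ₁_mem_Phi₁ hz.1 w) with hpos | hneg'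
    · -- `w z > 0` and `r_s w z < 0` force `w z ∈ ℝ α_s`, hence `w r_z w⁻¹ = r_s`
      have hrefl := D.refl₁_eq_r_of_ρ₁_r_mem_PhiNeg₁ hpos (by simpa using hneg)
      rw [D.refl₁_ρ₁ hz.1] at hrefl
      have hw : D.r s * w * D.refl₁ z = w := by
        rw [← hrefl, mul_assoc, mul_assoc, inv_mul_cancel_left, mul_assoc,
          D.refl₁_mul_self hz.1, mul_one]
      rw [hw]
      exact (D.len_le rfl).trans_lt (Nat.lt_succ_self _)
    · rw [mul_assoc]
      exact (D.len_r_mul_le s _).trans_lt (Nat.succ_lt_succ (ih hneg'))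

lemma len_mul_refl₁_lt (w : W) (hz : z ∈ D.PhiPos₁) (hneg : D.ρ₁ w z ∈ D.PhiNeg₁) :
    D.len (w * D.refl₁ z) < D.len w := by
  obtain ⟨l, hl, rfl⟩ := D.exists_reduced_word w
  exact hl ▸ D.len_mul_refl₁_lt_length l hz hneg

lemma refl₁_ρ₁_mem (hz : z ∈ D.Phi₁) (hzW : D.refl₁ z ∈ W') {w : W} (hw : w ∈ W') :
    D.refl₁ (D.ρ₁ w z) ∈ W' := by
  rw [D.refl₁_ρ₁ hz]
  exact W'.mul_mem (W'.mul_mem hw hzW) (W'.inv_mem hw)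

lemma refl₁_mem_of_mem_Delta₁ (hx : x ∈ D.Delta₁ W') : D.refl₁ x ∈ W' := by
  have h : D.refl₁ x ∈ D.Nbar (D.refl₁ x) ∩ (W' : Set W) := hx.2.2 ▸ rfl
  exact h.2

lemma refl₁_eq_of_ρ₁_mem_PhiNeg₁ (hx : x ∈ D.Delta₁ W') (hz : z ∈ D.PhiPos₁)
    (hzW : D.refl₁ z ∈ W') (hneg : D.ρ₁ (D.refl₁ x) z ∈ D.PhiNeg₁) :
    D.refl₁ z = D.refl₁ x := by
  have h : D.refl₁ z ∈ D.Nbar (D.refl₁ x) ∩ (W' : Set W) :=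
    ⟨⟨D.refl₁_mem_T hz.1, D.len_mul_refl₁_lt _ hz hneg⟩, hzW⟩
  rwa [hx.2.2] at h

lemma ρ₁_refl₁_mem_PhiPos₁ (hx : x ∈ D.Delta₁ W') (hy : y ∈ D.Delta₁ W')
    (hne : D.refl₁ x ≠ D.refl₁ y) : D.ρ₁ (D.refl₁ x) y ∈ D.PhiPos₁ :=
  (D.mem_PhiPos₁_or_mem_PhiNeg₁ (D.ρ₁_mem_Phi₁ hy.1.1 _)).resolve_right fun hneg =>
    hne (D.refl₁_eq_of_ρ₁_mem_PhiNeg₁ hx hy.1 (D.refl₁_mem_of_mem_Delta₁ hy) hneg).symm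

lemma linearIndependent_of_mem_Delta₁ (hx : x ∈ D.Delta₁ W') (hy : y ∈ D.Delta₁ W')
    (hne : D.refl₁ x ≠ D.refl₁ y) : LinearIndependent ℝ ![x, y] := by
  refine (LinearIndependent.pair_iff' (D.ne_zero_of_mem_PhiPos₁ hx.1)).2 fun c hc => ?_
  have hpos := D.ρ₁_refl₁_mem_PhiPos₁ hx hy hne
  rw [← hc, map_smul, D.ρ₁_refl₁_self hx.1.1, smul_neg, hc] at hpos
  exact D.notMem_PhiNeg₁_of_mem_PhiPos₁ hy.1 (Set.mem_neg.2 hpos)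

/-- If `a = ⟨x, φ y⟩ > 0` and `b = ⟨y, φ x⟩`, then `4ab < 1` by (D2) applied to the positive
roots `r_y x` and `r_x y`, so `r_x r_y x` is a negative root; canonicity of `r_x` then forces
`r_{r_y x} = r_x`, i.e. `r_y x ∥ x`, contradicting linear independence. -/
lemma pair_phi_nonpos_of_mem_Delta₁ (hx : x ∈ D.Delta₁ W') (hy : y ∈ D.Delta₁ W')
    (hne : D.refl₁ x ≠ D.refl₁ y) : D.pair x (D.phi y) ≤ 0 := by
  by_contra! ha
  set a := D.pair x (D.phi y)
  set b := D.pair y (D.phi x)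
  have hux : D.ρ₁ (D.refl₁ y) x = x - (2 * a) • y := D.refl₁_act y hy.1.1 x
  have hty : D.ρ₁ (D.refl₁ x) y = y - (2 * b) • x := D.refl₁_act x hx.1.1 y
  have hux_pos := D.ρ₁_refl₁_mem_PhiPos₁ hy hx hne.symm
  have hab : 4 * a * b < 1 := by
    by_contra! hab
    have hty_pos := D.ρ₁_refl₁_mem_PhiPos₁ hx hy hne
    refine D.D2a ?_
    convert smul_add_smul_mem_PLC (c := 1) (d := 4 * a * b - 1)
      (add_mem_PLC hux_pos.2 (smul_mem_PLC (c := 2 * a) (by positivity) hty_pos.2))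
      hx.1.2 zero_le_one (by linarith) (.inl one_pos) using 1
    rw [hux, hty]
    module
  have htux :
      D.ρ₁ (D.refl₁ x) (D.ρ₁ (D.refl₁ y) x) = (4 * a * b - 1) • x + (-(2 * a)) • y := by
    rw [hux, map_sub, map_smul, D.ρ₁_refl₁_self hx.1.1, hty]
    module
  have htux_neg := D.mem_PhiNeg₁_of_eq_smul_add_smul (D.ρ₁_mem_Phi₁ hux_pos.1 _) hx.1 hy.1
    htux (by linarith) (by linarith)
  have hrefl := D.refl₁_eq_of_ρ₁_mem_PhiNeg₁ hx hux_pos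
    (D.refl₁_ρ₁_mem hx.1.1 (D.refl₁_mem_of_mem_Delta₁ hx) (D.refl₁_mem_of_mem_Delta₁ hy))
    htux_neg
  have hsmul : (1 : ℝ) • x + (-(2 * a)) • y =
      D.pair (D.ρ₁ (D.refl₁ y) x) (D.phi x) • x + (0 : ℝ) • y := by
    rw [← D.eq_smul_of_refl₁_eq hux_pos.1 hx.1.1 hrefl, hux]
    module
  have := ((D.linearIndependent_of_mem_Delta₁ hx hy hne).eq_of_pair hsmul).2
  linarith

lemma coeff_nonneg_of_mem_PhiPos₁ (hx : x ∈ D.Delta₁ W') (hy : y ∈ D.Delta₁ W')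
    (hne : D.refl₁ x ≠ D.refl₁ y) (hz : z ∈ D.PhiPos₁) (hzW : D.refl₁ z ∈ W') {c d : ℝ}
    (h : z = c • x + d • y) : 0 ≤ d := by
  by_contra! hd
  have hb := D.pair_phi_nonpos_of_mem_Delta₁ hy hx hne.symm
  have hc : 0 < c := by
    by_contra! hc
    exact D.notMem_PhiNeg₁_of_mem_PhiPos₁ hz
      (D.mem_PhiNeg₁_of_eq_smul_add_smul hz.1 hx.1 hy.1 h hc hd)
  have htz : D.ρ₁ (D.refl₁ x) z = (-c - 2 * D.pair y (D.phi x) * d) • x + d • y := by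
    rw [h, map_add, map_smul, map_smul, D.ρ₁_refl₁_self hx.1.1, D.refl₁_act x hx.1.1 y]
    module
  have htz_neg := D.mem_PhiNeg₁_of_eq_smul_add_smul (D.ρ₁_mem_Phi₁ hz.1 _) hx.1 hy.1 htz
    (by nlinarith) hd
  have hrefl := D.refl₁_eq_of_ρ₁_mem_PhiNeg₁ hx hz hzW htz_neg
  have hsmul : c • x + d • y = D.pair z (D.phi x) • x + (0 : ℝ) • y := by
    rw [← h, zero_smul, add_zero, ← D.eq_smul_of_refl₁_eq hz.1 hx.1.1 hrefl]
  exact hd.ne ((D.linearIndependent_of_mem_Delta₁ hx hy hne).eq_of_pair hsmul).2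

lemma refl₁_ρ₁_altEnd_mem (hx : x ∈ D.Delta₁ W') (hy : y ∈ D.Delta₁ W') (m : ℕ) :
    D.refl₁ (D.ρ₁ (altEnd (D.refl₁ x) (D.refl₁ y) m) x) ∈ W' :=
  D.refl₁_ρ₁_mem hx.1.1 (D.refl₁_mem_of_mem_Delta₁ hx)
    (altEnd_mem (D.refl₁_mem_of_mem_Delta₁ hx) (D.refl₁_mem_of_mem_Delta₁ hy) m)

/-- Write `altEnd r_x r_y (m + 1) = s · altEnd r_x r_y m` with `s ∈ {r_x, r_y}`. If
`z = altEnd r_x r_y m x` is positive but `s z` is negative, canonicity of `s` gives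
`r_z = s`, i.e. `altEnd r_y r_x (m + 1) = altEnd r_x r_y (m + 1)`, so `(r_x r_y)^(m+1) = 1`. -/
lemma ρ₁_altEnd_mem_PhiPos₁ (hx : x ∈ D.Delta₁ W') (hy : y ∈ D.Delta₁ W') (m : ℕ)
    (hm : m < orderOf (D.refl₁ x * D.refl₁ y) ∨ ¬ IsOfFinOrder (D.refl₁ x * D.refl₁ y)) :
    D.ρ₁ (altEnd (D.refl₁ x) (D.refl₁ y) m) x ∈ D.PhiPos₁ := by
  induction m with
  | zero => simpa [altEnd] using hx.1
  | succ m ih =>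
    have hpos := ih (hm.imp_left m.lt_succ_self.trans)
    obtain ⟨s, hs, hsucc⟩ := exists_altEnd_succ_eq_mul (D.refl₁ x) (D.refl₁ y) m
    obtain ⟨v, hv, rfl⟩ : ∃ v ∈ D.Delta₁ W', D.refl₁ v = s :=
      hs.elim (fun h => ⟨x, hx, h.symm⟩) (fun h => ⟨y, hy, h.symm⟩)
    refine (D.mem_PhiPos₁_or_mem_PhiNeg₁ (D.ρ₁_mem_Phi₁ hx.1.1 _)).resolve_right
      fun hneg => ?_
    rw [hsucc, map_mul, Module.End.mul_apply] at hneg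
    have hrefl := D.refl₁_eq_of_ρ₁_mem_PhiNeg₁ hv hpos (D.refl₁_ρ₁_altEnd_mem hx hy m) hneg
    rw [D.refl₁_ρ₁ hx.1.1] at hrefl
    have hpow : (D.refl₁ x * D.refl₁ y) ^ (m + 1) = 1 := by
      rw [← altEnd_inv_mul_altEnd (D.refl₁_mul_self hx.1.1) (D.refl₁_mul_self hy.1.1),
        hsucc, altEnd, ← hrefl, inv_mul_cancel_right, inv_mul_cancel]
    rcases hm with hlt | hinf
    · exact pow_ne_one_of_lt_orderOf m.succ_ne_zero hlt hpow
    · exact hinf (isOfFinOrder_iff_pow_eq_one.2 ⟨m + 1, m.succ_pos, hpow⟩)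

lemma coeffs_nonneg_of_ρ₁_altEnd_eq (hx : x ∈ D.Delta₁ W') (hy : y ∈ D.Delta₁ W')
    (hne : D.refl₁ x ≠ D.refl₁ y) (m : ℕ)
    (hm : m < orderOf (D.refl₁ x * D.refl₁ y) ∨ ¬ IsOfFinOrder (D.refl₁ x * D.refl₁ y))
    {c d : ℝ} (h : D.ρ₁ (altEnd (D.refl₁ x) (D.refl₁ y) m) x = c • x + d • y) :
    0 ≤ c ∧ 0 ≤ d := by
  have hpos := D.ρ₁_altEnd_mem_PhiPos₁ hx hy m hm
  have hW := D.refl₁_ρ₁_altEnd_mem hx hy m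
  exact ⟨D.coeff_nonneg_of_mem_PhiPos₁ hy hx hne.symm hpos hW (h.trans (add_comm _ _)),
    D.coeff_nonneg_of_mem_PhiPos₁ hx hy hne hpos hW h⟩

theorem altEnd_coeffs_nonneg (W' : Subgroup W) :
    ∀ x ∈ D.Delta₁ W', ∀ y ∈ D.Delta₁ W', D.refl₁ x ≠ D.refl₁ y →
      ∀ m : ℕ,
        (m < orderOf (D.refl₁ x * D.refl₁ y) ∨
          ¬ IsOfFinOrder (D.refl₁ x * D.refl₁ y)) →
        ∀ cm dm cm' dm' : ℝ,
          D.ρ₁ (altEnd (D.refl₁ x) (D.refl₁ y) m) x = cm • x + dm • y →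
          D.ρ₁ (altEnd (D.refl₁ y) (D.refl₁ x) m) y = cm' • x + dm' • y →
          0 ≤ cm ∧ 0 ≤ dm ∧ 0 ≤ cm' ∧ 0 ≤ dm' := by
  intro x hx y hy hne m hm cm dm cm' dm' h h'
  have hswap : D.refl₁ y * D.refl₁ x = (D.refl₁ x * D.refl₁ y)⁻¹ := by
    rw [mul_inv_rev, inv_eq_of_mul_eq_one_right (D.refl₁_mul_self hx.1.1),
      inv_eq_of_mul_eq_one_right (D.refl₁_mul_self hy.1.1)]
  have hm' : m < orderOf (D.refl₁ y * D.refl₁ x) ∨ ¬ IsOfFinOrder (D.refl₁ y * D.refl₁ x) := by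
    rwa [hswap, orderOf_inv, isOfFinOrder_inv_iff]
  obtain ⟨hcm, hdm⟩ := D.coeffs_nonneg_of_ρ₁_altEnd_eq hx hy hne m hm h
  obtain ⟨hdm', hcm'⟩ :=
    D.coeffs_nonneg_of_ρ₁_altEnd_eq hy hx hne.symm m hm' (h'.trans (add_comm _ _))
  exact ⟨hcm, hdm, hcm', hdm'⟩

def symm : CoxeterDatum S V₂ V₁ W where
  pair := D.pair.flip
  α := D.β
  β := D.α
  α_inj := D.β_inj
  β_inj := D.α_inj
  D1 s := D.D1 s
  D2a := D.D2b
  D2b := D.D2a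
  D2c := D.D2d
  D2d := D.D2c
  D3 s t h := D.D3 t s h.symm
  D4 s t h := D.D4 t s h
  D5 s t h := by simpa only [LinearMap.flip_apply, mul_comm] using D.D5 t s h.symm
  r := D.r
  r_gen := D.r_gen
  r_ne_one := D.r_ne_one
  r_sq := D.r_sq
  ρ₁ := D.ρ₂
  ρ₂ := D.ρ₁
  ρ₁_inj := D.ρ₂_inj
  ρ₂_inj := D.ρ₁_inj
  hr₁ := D.hr₂
  hr₂ := D.hr₁
  pair_inv w v v' := D.pair_inv w v' v
  phi := D.phiInv
  phiInv := D.phi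
  refl₁ := D.refl₂
  refl₂ := D.refl₁
  decomp₁ := D.decomp₂
  disj₁ := D.disj₂
  decomp₂ := D.decomp₁
  disj₂ := D.disj₁
  phi_mem := D.phiInv_mem
  phiInv_mem := D.phi_mem
  phiInv_phi := D.phi_phiInv
  phi_phiInv := D.phiInv_phi
  phi_simple s := by simpa only [D.phi_simple] using D.phiInv_phi (D.α s) (D.α_mem_Phi₁ s)
  phi_equiv w y hy := by
    have hx := D.phiInv_mem y hy
    conv_lhs => rw [← D.phi_phiInv y hy, ← D.phi_equiv w _ hx]
    exact D.phiInv_phi _ (D.ρ₁_mem_Phi₁ hx w)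
  refl₁_eq := D.refl₂_eq
  refl₂_eq := D.refl₁_eq
  refl₁_act := D.refl₂_act
  refl₂_act := D.refl₁_act

end CoxeterDatum

theorem stmt18_general {S V₁ V₂ W : Type*} [AddCommGroup V₁] [Module ℝ V₁]
    [AddCommGroup V₂] [Module ℝ V₂] [Group W]
    (D : CoxeterDatum S V₁ V₂ W)
    (W' : Subgroup W) :
    (∀ x ∈ D.Delta₁ W', ∀ y ∈ D.Delta₁ W', D.refl₁ x ≠ D.refl₁ y →
      ∀ m : ℕ,
        (m < orderOf (D.refl₁ x * D.refl₁ y) ∨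
          ¬ IsOfFinOrder (D.refl₁ x * D.refl₁ y)) →
        ∀ cm dm cm' dm' : ℝ,
          D.ρ₁ (altEnd (D.refl₁ x) (D.refl₁ y) m) x = cm • x + dm • y →
          D.ρ₁ (altEnd (D.refl₁ y) (D.refl₁ x) m) y = cm' • x + dm' • y →
          0 ≤ cm ∧ 0 ≤ dm ∧ 0 ≤ cm' ∧ 0 ≤ dm') ∧
    (∀ x ∈ D.Delta₂ W', ∀ y ∈ D.Delta₂ W', D.refl₂ x ≠ D.refl₂ y →
      ∀ m : ℕ,
        (m < orderOf (D.refl₂ x * D.refl₂ y) ∨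
          ¬ IsOfFinOrder (D.refl₂ x * D.refl₂ y)) →
        ∀ cm dm cm' dm' : ℝ,
          D.ρ₂ (altEnd (D.refl₂ x) (D.refl₂ y) m) x = cm • x + dm • y →
          D.ρ₂ (altEnd (D.refl₂ y) (D.refl₂ x) m) y = cm' • x + dm' • y →
          0 ≤ cm ∧ 0 ≤ dm ∧ 0 ≤ cm' ∧ 0 ≤ dm') :=
  ⟨D.altEnd_coeffs_nonneg W', D.symm.altEnd_coeffs_nonneg W'⟩

/-- Let `W'` be a reflection subgroup of `W`, `i ∈ {1,2}`, and
`x, y ∈ Δᵢ(W')` with `r_x ≠ r_y`; let `n` be the order of `r_x r_y` (possibly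
infinite).  If for `0 ≤ m < n` we write `(⋯ r_y r_x r_y) x = c_m x + d_m y` and
`(⋯ r_x r_y r_x) y = c'_m x + d'_m y` (alternating products of `m` factors), then
`c_m, d_m, c'_m, d'_m ≥ 0`. -/
theorem stmt18 {S V₁ V₂ W : Type*} [AddCommGroup V₁] [Module ℝ V₁]
    [AddCommGroup V₂] [Module ℝ V₂] [Group W]
    (D : CoxeterDatum S V₁ V₂ W)
    (W' : Subgroup W) (hW' : D.IsReflectionSubgroup W') :
    (∀ x ∈ D.Delta₁ W', ∀ y ∈ D.Delta₁ W', D.refl₁ x ≠ D.refl₁ y →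
      ∀ m : ℕ,
        (m < orderOf (D.refl₁ x * D.refl₁ y) ∨
          ¬ IsOfFinOrder (D.refl₁ x * D.refl₁ y)) →
        ∀ cm dm cm' dm' : ℝ,
          D.ρ₁ (altEnd (D.refl₁ x) (D.refl₁ y) m) x = cm • x + dm • y →
          D.ρ₁ (altEnd (D.refl₁ y) (D.refl₁ x) m) y = cm' • x + dm' • y →
          0 ≤ cm ∧ 0 ≤ dm ∧ 0 ≤ cm' ∧ 0 ≤ dm') ∧
    (∀ x ∈ D.Delta₂ W', ∀ y ∈ D.Delta₂ W', D.refl₂ x ≠ D.refl₂ y →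
      ∀ m : ℕ,
        (m < orderOf (D.refl₂ x * D.refl₂ y) ∨
          ¬ IsOfFinOrder (D.refl₂ x * D.refl₂ y)) →
        ∀ cm dm cm' dm' : ℝ,
          D.ρ₂ (altEnd (D.refl₂ x) (D.refl₂ y) m) x = cm • x + dm • y →
          D.ρ₂ (altEnd (D.refl₂ y) (D.refl₂ x) m) y = cm' • x + dm' • y →
          0 ≤ cm ∧ 0 ≤ dm ∧ 0 ≤ cm' ∧ 0 ≤ dm') :=
  stmt18_general D W'
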